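/- For every N ≥ 2 and every choice of coefficients c_i ∈ {0,1} for i = 2, …, N, the Fibonacci shift satisfies ρ(Σ_{i=2}^{N} c_i F_i) = Σ_{i=2}^{N} c_i F_{i+1}. -/
import Mathlib


/-- The golden ratio `φ = (1 + √5)/2`. -/
noncomputable def phi : ℝ := (1 + Real.sqrt 5) / 2

/-- The Fibonacci shift `ρ(n) = ⌊nφ + 1/φ⌋`. -/
noncomputable def rho (n : ℕ) : ℕ := ⌊(n : ℝ) * phi + 1 / phi⌋₊

/-- `1/φ = φ - 1 = (√5 - 1)/2`. -/
noncomputable def tgold : ℝ := (Real.sqrt 5 - 1) / 2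

lemma sqrt5_sq : Real.sqrt 5 ^ 2 = 5 := Real.sq_sqrt (by norm_num)

lemma sqrt5_gt : (2 : ℝ) < Real.sqrt 5 := by
  nlinarith [sqrt5_sq, Real.sqrt_nonneg 5]

lemma tgold_pos : 0 < tgold := by unfold tgold; nlinarith [sqrt5_gt]

lemma phi_tgold : phi * tgold = 1 := by
  unfold phi tgold; nlinarith [sqrt5_sq]

lemma one_add_tgold : 1 + tgold = phi := by unfold phi tgold; ring

lemma tgold_sq : tgold ^ 2 = 1 - tgold := by
  unfold tgold; nlinarith [sqrt5_sq]

lemma binet : ∀ i : ℕ, (Nat.fib (i + 1) : ℝ) = (Nat.fib i : ℝ) * phi + (-tgold) ^ i := by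
  have key : ∀ i : ℕ,
      ((Nat.fib (i + 1) : ℝ) = (Nat.fib i : ℝ) * phi + (-tgold) ^ i) ∧
      ((Nat.fib (i + 2) : ℝ) = (Nat.fib (i + 1) : ℝ) * phi + (-tgold) ^ (i + 1)) := by
    intro i
    induction i with
    | zero =>
      constructor
      · simp [Nat.fib]
      · have h1 : (Nat.fib 2 : ℝ) = 1 := by norm_num [Nat.fib]
        have h2 : (Nat.fib 1 : ℝ) = 1 := by norm_num [Nat.fib]
        rw [h1, h2]
        have := one_add_tgold
        ring_nf
        linarith
    | succ n ih =>
      refine ⟨ih.2, ?_⟩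
      have hfib : (Nat.fib (n + 3) : ℝ) = (Nat.fib (n + 2) : ℝ) + (Nat.fib (n + 1) : ℝ) := by
        rw [show n + 3 = (n + 1) + 2 by ring, Nat.fib_add_two]
        push_cast; ring
      have hfib2 : (Nat.fib (n + 2) : ℝ) = (Nat.fib (n + 1) : ℝ) + (Nat.fib n : ℝ) := by
        rw [Nat.fib_add_two]; push_cast; ring
      show (Nat.fib (n + 3) : ℝ) = (Nat.fib (n + 2) : ℝ) * phi + (-tgold) ^ (n + 2)
      have hpow : (-tgold) ^ (n + 2) = (-tgold) ^ (n + 1) + (-tgold) ^ n := by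
        have h : (-tgold) ^ (n + 2) = (-tgold) ^ n * tgold ^ 2 := by ring
        rw [h, tgold_sq]; ring
      linear_combination hfib + ih.1 + ih.2 - hpow - phi * hfib2
  exact fun i => (key i).1

lemma key_bound (N : ℕ) (c : ℕ → ℕ)
    (hc : ∀ i, 2 ≤ i → i ≤ N → c i = 0 ∨ c i = 1) :
    ∀ k a, 2 ≤ a → N < a + k →
      -phi * tgold ^ (a + 1) < (-1 : ℝ) ^ a * ∑ i ∈ Finset.Icc a N, (c i : ℝ) * (-tgold) ^ i ∧
      (-1 : ℝ) ^ a * ∑ i ∈ Finset.Icc a N, (c i : ℝ) * (-tgold) ^ i < phi * tgold ^ a := by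
  have ht0 := tgold_pos
  have ht1 := phi_tgold
  have ht2 := one_add_tgold
  intro k
  induction k with
  | zero =>
    intro a ha hNa
    rw [Finset.Icc_eq_empty (by omega)]
    simp only [Finset.sum_empty, mul_zero]
    have hta : 0 < tgold ^ a := pow_pos ht0 a
    have hta1 : 0 < tgold ^ (a + 1) := pow_pos ht0 (a + 1)
    constructor <;> nlinarith
  | succ k ih =>
    intro a ha hNa
    by_cases hle : a ≤ N
    · have hsplit : Finset.Icc a N = insert a (Finset.Icc (a + 1) N) := by
        ext x
        simp only [Finset.mem_Icc, Finset.mem_insert]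
        omega
      rw [hsplit, Finset.sum_insert (by simp)]
      have ihs := ih (a + 1) (by omega) (by omega)
      set S := ∑ i ∈ Finset.Icc (a + 1) N, (c i : ℝ) * (-tgold) ^ i with hS
      have hca : (0 : ℝ) ≤ (c a : ℝ) ∧ (c a : ℝ) ≤ 1 := by
        rcases hc a ha hle with h | h <;> simp [h]
      have hterm : (-1 : ℝ) ^ a * ((c a : ℝ) * (-tgold) ^ a) = (c a : ℝ) * tgold ^ a := by
        rw [show ((-tgold) ^ a : ℝ) = (-1) ^ a * tgold ^ a by rw [← neg_one_mul, mul_pow]]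
        rw [show ((-1 : ℝ) ^ a * ((c a : ℝ) * ((-1) ^ a * tgold ^ a)))
            = ((-1 : ℝ) ^ a * (-1) ^ a) * ((c a : ℝ) * tgold ^ a) by ring]
        rw [← pow_add, Even.neg_one_pow ⟨a, by ring⟩, one_mul]
      have hneg : (-1 : ℝ) ^ a * S = -((-1 : ℝ) ^ (a + 1) * S) := by
        rw [pow_succ]; ring
      rw [mul_add, hterm, hneg]
      obtain ⟨ih1, ih2⟩ := ihs
      have hta : 0 < tgold ^ a := pow_pos ht0 a
      have hkey : phi * tgold ^ (a + 1 + 1) = tgold ^ a * tgold := by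
        rw [pow_succ, pow_succ]
        linear_combination (tgold ^ a * tgold) * ht1
      have hfin : tgold ^ a + tgold ^ a * tgold = phi * tgold ^ a := by
        linear_combination tgold ^ a * ht2
      have hc0 : 0 ≤ (c a : ℝ) * tgold ^ a := mul_nonneg hca.1 hta.le
      have hc1 : (c a : ℝ) * tgold ^ a ≤ 1 * tgold ^ a :=
        mul_le_mul_of_nonneg_right hca.2 hta.le
      constructor
      · linarith [ih2]
      · linarith [ih1]
    · rw [Finset.Icc_eq_empty (by omega)]
      simp only [Finset.sum_empty, mul_zero]
      have hta : 0 < tgold ^ a := pow_pos ht0 a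
      have hta1 : 0 < tgold ^ (a + 1) := pow_pos ht0 (a + 1)
      constructor <;> nlinarith

/-- The Fibonacci shift maps `Σ c_i F_i` to `Σ c_i F_{i+1}` for `c_i ∈ {0,1}`. -/
theorem rho_shifts_fib_representations
    (N : ℕ) (hN : 2 ≤ N) (c : ℕ → ℕ)
    (hc : ∀ i, 2 ≤ i → i ≤ N → c i = 0 ∨ c i = 1) :
    rho (∑ i ∈ Finset.Icc 2 N, c i * Nat.fib i) =
      ∑ i ∈ Finset.Icc 2 N, c i * Nat.fib (i + 1) := by
  have ht0 := tgold_pos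
  have ht1 := phi_tgold
  have ht2 := one_add_tgold
  set n := ∑ i ∈ Finset.Icc 2 N, c i * Nat.fib i with hn
  set M := ∑ i ∈ Finset.Icc 2 N, c i * Nat.fib (i + 1) with hM
  set S := ∑ i ∈ Finset.Icc 2 N, (c i : ℝ) * (-tgold) ^ i with hS
  have hMreal : (M : ℝ) = (n : ℝ) * phi + S := by
    rw [hM, hn, hS]
    push_cast
    rw [Finset.sum_mul, ← Finset.sum_add_distrib]
    apply Finset.sum_congr rfl
    intro i _
    rw [binet i]
    ring
  have hinv : 1 / phi = tgold := by
    have hphi0 : phi ≠ 0 := by intro h; rw [h] at ht1; simp at ht1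
    field_simp
    linarith [ht1]
  have hbound := key_bound N c hc N 2 le_rfl (by omega)
  have hb1 : -phi * tgold ^ 3 < S := by
    have h := hbound.1
    norm_num [← hS] at h
    linarith
  have hb2 : S < phi * tgold ^ 2 := by
    have h := hbound.2
    norm_num [← hS] at h
    linarith
  have hc2 : phi * tgold ^ 2 = tgold := by linear_combination tgold * ht1
  have hc3 : phi * tgold ^ 3 = tgold ^ 2 := by linear_combination tgold ^ 2 * ht1
  have hc4 : tgold + tgold ^ 2 = 1 := by linear_combination tgold * ht2 + ht1
  have h1 : 0 ≤ tgold - S := by linarith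
  have h2 : tgold - S < 1 := by linarith
  have hx : (n : ℝ) * phi + 1 / phi = (M : ℝ) + (tgold - S) := by
    rw [hMreal, hinv]; ring
  unfold rho
  rw [hx]
  have hM0 : (0 : ℝ) ≤ (M : ℝ) := Nat.cast_nonneg M
  rw [Nat.floor_eq_iff (by linarith)]
  constructor
  · linarith
  · push_cast; linarith
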